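/- arXiv:1606.07315 — 3 statements merged into one kernel-verified Lean document; each statement's English description precedes it below -/
import Mathlib

section
/- Let A be a rank-r, μ-incoherent m×n real matrix with SVD A = UΣV^T. Then for any n×m real matrix C, ‖A C A‖_∞ ≤ (μ² r / √(mn)) · ‖A C A‖₂, where ‖·‖_∞ is the entrywise max norm and ‖·‖₂ the operator norm. -/
open scoped BigOperators
open Matrix

/-- Entrywise maximum absolute value norm of a matrix. -/
noncomputable def infNorm {m n : ℕ} (A : Matrix (Fin m) (Fin n) ℝ) : ℝ :=
  ⨆ i, ⨆ j, |A i j|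

/-- Operator (spectral) norm of a matrix. -/
noncomputable def opNorm {m n : ℕ} (A : Matrix (Fin m) (Fin n) ℝ) : ℝ :=
  ⨆ v : {v : EuclideanSpace ℝ (Fin n) // ‖v‖ ≤ 1}, ‖Matrix.toEuclideanLin A v.1‖

/-- The `i`-th largest singular value (1-indexed), via the Courant–Fischer
min-max characterization: the minimum over subspaces of dimension `n - i + 1`
of the largest value of `‖A v‖ / ‖v‖` on the subspace. -/
noncomputable def singVal {m n : ℕ} (A : Matrix (Fin m) (Fin n) ℝ) (i : ℕ) : ℝ :=
  sInf {c | ∃ V : Submodule ℝ (EuclideanSpace ℝ (Fin n)),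
    Module.finrank ℝ V = n - i + 1 ∧ ∀ v ∈ V, ‖Matrix.toEuclideanLin A v‖ ≤ c * ‖v‖}

/-- Entrywise hard thresholding at level `ζ`. -/
noncomputable def HT {m n : ℕ} (ζ : ℝ) (A : Matrix (Fin m) (Fin n) ℝ) :
    Matrix (Fin m) (Fin n) ℝ :=
  fun i j => if ζ ≤ |A i j| then A i j else 0

/-!
Since `A = U Σ Vᵀ` with `Uᵀ U = 1` and `Vᵀ V = 1`, the matrix `M = A C A` satisfies
`M = (U Uᵀ) M (V Vᵀ)`, so `M i j = ⟪(U Uᵀ) i, M (V Vᵀ) j⟫ ≤ ‖(U Uᵀ) i‖ ‖M‖₂ ‖(V Vᵀ) j‖` by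
Cauchy–Schwarz. As `U Uᵀ` is a symmetric idempotent, the squared norm of its `i`-th row is its
diagonal entry `∑ₗ U i l²`, which incoherence bounds by `μ² r / m`; likewise for `V Vᵀ`.
-/

open WithLp

lemma opNorm_eq_norm_toContinuousLinearMap {m n : ℕ} (M : Matrix (Fin m) (Fin n) ℝ) :
    opNorm M = ‖LinearMap.toContinuousLinearMap (Matrix.toEuclideanLin M)‖ := by
  have hball : Metric.closedBall (0 : EuclideanSpace ℝ (Fin n)) 1 = {v | ‖v‖ ≤ 1} :=
    Set.ext fun _ => mem_closedBall_zero_iff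
  rw [← ContinuousLinearMap.sSup_unitClosedBall_eq_norm, hball, Set.image_eq_range]
  rfl

lemma opNorm_nonneg {m n : ℕ} (M : Matrix (Fin m) (Fin n) ℝ) : 0 ≤ opNorm M :=
  opNorm_eq_norm_toContinuousLinearMap M ▸ norm_nonneg _

lemma abs_dotProduct_mulVec_le_opNorm {m n : ℕ} (M : Matrix (Fin m) (Fin n) ℝ)
    (y : Fin m → ℝ) (x : Fin n → ℝ) :
    |y ⬝ᵥ M *ᵥ x| ≤ ‖toLp 2 y‖ * opNorm M * ‖toLp 2 x‖ := by
  have hinner : y ⬝ᵥ M *ᵥ x = inner ℝ (toLp 2 y) (Matrix.toEuclideanLin M (toLp 2 x)) := by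
    simp [EuclideanSpace.inner_toLp_toLp, dotProduct_comm]
  rw [hinner, mul_assoc, opNorm_eq_norm_toContinuousLinearMap]
  exact (abs_real_inner_le_norm _ _).trans <| mul_le_mul_of_nonneg_left
    ((LinearMap.toContinuousLinearMap (Matrix.toEuclideanLin M)).le_opNorm _) (norm_nonneg _)

lemma infNorm_le {m n : ℕ} {M : Matrix (Fin m) (Fin n) ℝ} {c : ℝ} (hc : 0 ≤ c)
    (h : ∀ i j, |M i j| ≤ c) : infNorm M ≤ c :=
  Real.iSup_le (fun i => Real.iSup_le (h i) hc) hc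

namespace Matrix

variable {R ι ι' κ κ' : Type*} [CommRing R] [Fintype κ]

lemma mul_mul_apply_eq_dotProduct_mulVec [Fintype ι'] (P : Matrix ι ι' R) (M : Matrix ι' κ R)
    (Q : Matrix κ κ' R) (i : ι) (j : κ') : (P * M * Q) i j = P i ⬝ᵥ M *ᵥ Qᵀ j := by
  rw [Matrix.mul_assoc]
  simp [mul_apply, dotProduct, mulVec]

variable [Fintype ι] [DecidableEq κ] {U : Matrix ι κ R}

lemma mul_transpose_mul_cancel (hU : Uᵀ * U = 1) : U * Uᵀ * U = U := by
  rw [Matrix.mul_assoc, hU, Matrix.mul_one]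

lemma sum_sq_mul_transpose_apply (hU : Uᵀ * U = 1) (i : ι) :
    ∑ k, (U * Uᵀ) i k ^ 2 = ∑ l, U i l ^ 2 := by
  calc ∑ k, (U * Uᵀ) i k ^ 2 = (U * Uᵀ * (U * Uᵀ)ᵀ) i i := by
        simp only [mul_apply (M := U * Uᵀ), transpose_apply, sq]
    _ = (U * Uᵀ) i i := by
        rw [transpose_mul, transpose_transpose, ← Matrix.mul_assoc, mul_transpose_mul_cancel hU]
    _ = ∑ l, U i l ^ 2 := by simp only [mul_apply, transpose_apply, sq]

end Matrix

lemma norm_toLp_mul_transpose_apply {ι κ : Type*} [Fintype ι] [Fintype κ] [DecidableEq κ]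
    {U : Matrix ι κ ℝ} (hU : Uᵀ * U = 1) (i : ι) :
    ‖toLp 2 ((U * Uᵀ) i)‖ = √(∑ l, U i l ^ 2) := by
  simp [EuclideanSpace.norm_eq, Matrix.sum_sq_mul_transpose_apply hU]

lemma mul_transpose_mul_mul_transpose_eq_self {R ι κ ν ρ : Type*} [CommRing R]
    [Fintype ι] [Fintype κ] [Fintype ν] [Fintype ρ] [DecidableEq κ] [DecidableEq ν]
    {U : Matrix ι κ R} {V : Matrix ρ ν R} (hU : Uᵀ * U = 1) (hV : Vᵀ * V = 1)
    (D : Matrix κ ν R) (C : Matrix ρ ι R) :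
    U * Uᵀ * (U * D * Vᵀ * C * (U * D * Vᵀ)) * (V * Vᵀ) = U * D * Vᵀ * C * (U * D * Vᵀ) := by
  have hV' : Vᵀ * (V * Vᵀ) = Vᵀ := by
    simpa using congrArg transpose (Matrix.mul_transpose_mul_cancel hV)
  simp only [← Matrix.mul_assoc, Matrix.mul_transpose_mul_cancel hU]
  simp only [Matrix.mul_assoc, hV']

theorem stmt2_general {m n r : ℕ} (μ : ℝ)
    (A : Matrix (Fin m) (Fin n) ℝ) (C : Matrix (Fin n) (Fin m) ℝ)
    (U : Matrix (Fin m) (Fin r) ℝ) (σ : Fin r → ℝ) (V : Matrix (Fin n) (Fin r) ℝ)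
    (hA : A = U * Matrix.diagonal σ * Vᵀ)
    (hU : Uᵀ * U = 1) (hV : Vᵀ * V = 1)
    (hUinc : ∀ i, Real.sqrt (∑ l, U i l ^ 2) ≤ μ * Real.sqrt (r / m))
    (hVinc : ∀ j, Real.sqrt (∑ l, V j l ^ 2) ≤ μ * Real.sqrt (r / n)) :
    infNorm (A * C * A) ≤ μ ^ 2 * r / Real.sqrt (m * n) * opNorm (A * C * A) := by
  set M := A * C * A
  have hproj : U * Uᵀ * M * (V * Vᵀ) = M := by
    simp only [M, hA]
    exact mul_transpose_mul_mul_transpose_eq_self hU hV _ C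
  have hop := opNorm_nonneg M
  have hsqrt : √(r / m : ℝ) * √(r / n) = r / √(m * n) := by
    rw [← Real.sqrt_mul (by positivity), div_mul_div_comm, Real.sqrt_div (by positivity),
      Real.sqrt_mul_self (by positivity)]
  refine infNorm_le (mul_nonneg (by positivity) hop) fun i j => ?_
  have hμ : 0 ≤ μ * √(r / m) := (Real.sqrt_nonneg _).trans (hUinc i)
  calc |M i j| = |(U * Uᵀ) i ⬝ᵥ M *ᵥ (V * Vᵀ)ᵀ j| := by
        rw [← Matrix.mul_mul_apply_eq_dotProduct_mulVec, hproj]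
    _ ≤ ‖toLp 2 ((U * Uᵀ) i)‖ * opNorm M * ‖toLp 2 ((V * Vᵀ) j)‖ := by
        simpa only [Matrix.transpose_mul, Matrix.transpose_transpose]
          using abs_dotProduct_mulVec_le_opNorm M _ _
    _ ≤ μ * √(r / m) * opNorm M * (μ * √(r / n)) := by
        rw [norm_toLp_mul_transpose_apply hU, norm_toLp_mul_transpose_apply hV]
        gcongr
        exacts [hUinc i, hVinc j]
    _ = μ ^ 2 * r / √(m * n) * opNorm M := by linear_combination (μ ^ 2 * opNorm M) * hsqrt

/-- For a rank-`r`, `μ`-incoherent matrix `A = U Σ Vᵀ` and any `C`: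
`‖A C A‖_∞ ≤ (μ² r / √(mn)) ‖A C A‖₂`. -/
theorem stmt2 {m n r : ℕ} (μ : ℝ)
    (A : Matrix (Fin m) (Fin n) ℝ) (C : Matrix (Fin n) (Fin m) ℝ)
    (U : Matrix (Fin m) (Fin r) ℝ) (σ : Fin r → ℝ) (V : Matrix (Fin n) (Fin r) ℝ)
    (hA : A = U * Matrix.diagonal σ * Vᵀ)
    (hU : Uᵀ * U = 1) (hV : Vᵀ * V = 1) (hσ : ∀ l, 0 < σ l)
    (hUinc : ∀ i, Real.sqrt (∑ l, U i l ^ 2) ≤ μ * Real.sqrt (r / m))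
    (hVinc : ∀ j, Real.sqrt (∑ l, V j l ^ 2) ≤ μ * Real.sqrt (r / n)) :
    infNorm (A * C * A) ≤ μ ^ 2 * r / Real.sqrt (m * n) * opNorm (A * C * A) :=
  stmt2_general μ A C U σ V hA hU hV hUinc hVinc
end

section
/- Let A ∈ ℝ^{n×n} be symmetric with eigenvalues |σ₁| ≥ ⋯ ≥ |σ_n|, B = A + H with ‖H‖₂ ≤ |σ_k|/4, and P_k(B) = UΛU^T the rank-k spectral truncation of B. Then P_k(B) admits the absolutely convergent expansion P_k(B) = Σ_{s,t ≥ 0} H^s (A U Λ^{−(s+t+1)} U^T A) H^t. -/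
open scoped BigOperators
open Matrix

/-!
Fix `i ≤ k` and write `B = A + H`, `B u = λ u` with `u = uᵢ`, `λ = λᵢ`, `P = u uᵀ` and
`r = H / λ`. Since `A P = λ (1 - r) P` and `P A = λ P (1 - r)`, the `(s, t)` term of the series is
`λ rˢ (1 - r) P (1 - r) rᵗ`, and `∑ rˢ = (1 - r)⁻¹` turns the double series into `λ P`; summing
over `i ≤ k` gives the theorem. The Neumann series converges because `‖H‖ < |λᵢ|`, which comes from
Weyl's inequality `|σₖ| ≤ |λᵢ| + ‖H‖`: by a dimension count, `span {w₁, …, wₖ}` and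
`span {uᵢ, …, u_N}` share a unit vector `x`, and `|σₖ| ≤ ‖A x‖ ≤ ‖B x‖ + ‖H x‖ ≤ |λᵢ| + ‖H‖`.
-/

theorem hasSum_pow_mul_mul_pow {R : Type*} [NormedRing R] [CompleteSpace R] {r : R}
    (hr : ‖r‖ < 1) (Q : R) :
    HasSum (fun st : ℕ × ℕ => r ^ st.1 * Q * r ^ st.2) ((∑' n, r ^ n) * Q * ∑' n, r ^ n) := by
  have hg : Summable fun n => ‖r ^ n‖ := summable_norm_geometric_of_norm_lt_one hr
  have hf : Summable fun n => ‖r ^ n * Q‖ :=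
    (hg.mul_right ‖Q‖).of_nonneg_of_le (fun _ => norm_nonneg _) fun _ => norm_mul_le _ _
  rw [← (summable_geometric_of_norm_lt_one hr).tsum_mul_right,
    tsum_mul_tsum_of_summable_norm hf hg]
  exact (summable_mul_of_summable_norm hf hg).hasSum

theorem hasSum_inv_pow_smul_pow_mul_mul_pow {𝕜 R : Type*} [NormedField 𝕜] [NormedRing R]
    [NormedAlgebra 𝕜 R] [CompleteSpace R] {A H P : R} {μ : 𝕜} (hH : ‖H‖ < ‖μ‖)
    (hleft : (A + H) * P = μ • P) (hright : P * (A + H) = μ • P) :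
    HasSum (fun st : ℕ × ℕ => (μ ^ (st.1 + st.2 + 1))⁻¹ • (H ^ st.1 * (A * P * A) * H ^ st.2))
      (μ • P) := by
  have hμ : μ ≠ 0 := norm_pos_iff.mp ((norm_nonneg H).trans_lt hH)
  set r := μ⁻¹ • H
  have hr : ‖r‖ < 1 := by
    rwa [norm_smul, norm_inv, inv_mul_lt_one₀ (norm_pos_iff.mpr hμ)]
  have hHr : H = μ • r := by simp [r, smul_smul, hμ]
  have hAP : A * P = μ • ((1 - r) * P) := by
    rw [eq_sub_of_add_eq (a := A * P) (by rw [← add_mul, hleft]), hHr, smul_mul_assoc, ← smul_sub,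
      sub_mul, one_mul]
  have hPA : P * A = μ • (P * (1 - r)) := by
    rw [eq_sub_of_add_eq (a := P * A) (by rw [← mul_add, hright]), hHr, mul_smul_comm, ← smul_sub,
      mul_sub, mul_one]
  have hAPA : A * P * A = μ ^ 2 • ((1 - r) * P * (1 - r)) := by
    rw [hAP, smul_mul_assoc, mul_assoc, hPA, mul_smul_comm, smul_smul, ← mul_assoc, sq]
  have hterm : ∀ st : ℕ × ℕ, (μ ^ (st.1 + st.2 + 1))⁻¹ • (H ^ st.1 * (A * P * A) * H ^ st.2) =
      μ • (r ^ st.1 * ((1 - r) * P * (1 - r)) * r ^ st.2) := by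
    rintro ⟨s, t⟩
    simp only [hAPA, hHr, smul_pow, smul_mul_assoc, mul_smul_comm, smul_smul]
    congr 1
    field_simp
    ring
  have hsum : (∑' n, r ^ n) * ((1 - r) * P * (1 - r)) * ∑' n, r ^ n = P := by
    simp only [← mul_assoc, geom_series_mul_neg r hr, one_mul]
    rw [mul_assoc, mul_neg_geom_series r hr, mul_one]
  simpa only [hterm, hsum] using (hasSum_pow_mul_mul_pow hr ((1 - r) * P * (1 - r))).const_smul μ

section L2OpNorm

-- The L2 operator norm on matrices induces the entrywise topology definitionally, so the `HasSum`
-- below is the usual one.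
open scoped Matrix.Norms.L2Operator

theorem opNorm_eq_l2_opNorm {m n : ℕ} (A : Matrix (Fin m) (Fin n) ℝ) : opNorm A = ‖A‖ := by
  rw [l2_opNorm_def, ← ContinuousLinearMap.sSup_unitClosedBall_eq_norm, opNorm, iSup]
  congr 1
  ext r
  simp

theorem norm_toEuclideanLin_le_opNorm {m n : ℕ} (A : Matrix (Fin m) (Fin n) ℝ)
    (x : EuclideanSpace ℝ (Fin n)) : ‖toEuclideanLin A x‖ ≤ opNorm A * ‖x‖ :=
  opNorm_eq_l2_opNorm A ▸ l2_opNorm_mulVec A x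

theorem hasSum_inv_pow_smul_pow_mul_mul_vecMulVec_mul_pow {N : ℕ}
    {A H : Matrix (Fin N) (Fin N) ℝ} {u : Fin N → ℝ} {μ : ℝ} (hH : opNorm H < |μ|)
    (hsymm : (A + H)ᵀ = A + H) (hu : (A + H) *ᵥ u = μ • u) :
    HasSum (fun st : ℕ × ℕ =>
        (μ ^ (st.1 + st.2 + 1))⁻¹ • (H ^ st.1 * (A * vecMulVec u u * A) * H ^ st.2))
      (μ • vecMulVec u u) := by
  refine hasSum_inv_pow_smul_pow_mul_mul_pow (by rwa [← opNorm_eq_l2_opNorm]) ?_ ?_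
  · rw [mul_vecMulVec, hu, smul_vecMulVec]
  · rw [vecMulVec_mul, ← mulVec_transpose, hsymm, hu, vecMulVec_smul]

end L2OpNorm

section SpectralDecomposition

variable {n ι : Type*} [Fintype n] [DecidableEq ι]

theorem mulVec_eq_smul_of_eq_sum_vecMulVec {M : Matrix n n ℝ} {s : Finset ι} {ev : ι → ℝ}
    {v : ι → n → ℝ} (hM : M = ∑ j ∈ s, ev j • vecMulVec (v j) (v j))
    (hv : ∀ i ∈ s, ∀ j ∈ s, v i ⬝ᵥ v j = if i = j then 1 else 0) {i : ι} (hi : i ∈ s) :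
    M *ᵥ v i = ev i • v i := by
  rw [hM, sum_mulVec, Finset.sum_eq_single_of_mem i hi]
  · simp [smul_mulVec, vecMulVec_mulVec, hv i hi i hi]
  · intro j hj hji
    simp [smul_mulVec, vecMulVec_mulVec, hv j hj i hi, hji]

theorem orthonormal_toLp_of_dotProduct {s : Finset ι} {v : ι → n → ℝ}
    (hv : ∀ i ∈ s, ∀ j ∈ s, v i ⬝ᵥ v j = if i = j then 1 else 0) :
    Orthonormal ℝ fun j : s => WithLp.toLp 2 (v j) := by
  rw [orthonormal_iff_ite]
  rintro ⟨i, hi⟩ ⟨j, hj⟩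
  simp [EuclideanSpace.inner_toLp_toLp, dotProduct_comm, hv i hi j hj]

theorem finrank_span_toLp {s : Finset ι} {v : ι → n → ℝ}
    (hv : ∀ i ∈ s, ∀ j ∈ s, v i ⬝ᵥ v j = if i = j then 1 else 0) :
    Module.finrank ℝ (Submodule.span ℝ (Set.range fun j : s => WithLp.toLp 2 (v j))) =
      s.card := by
  rw [finrank_span_eq_card (orthonormal_toLp_of_dotProduct hv).linearIndependent,
    Fintype.card_coe]

theorem exists_norm_sq_eq_sum_of_mem_span [DecidableEq n] {M : Matrix n n ℝ} {s T : Finset ι}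
    {ev : ι → ℝ} {v : ι → n → ℝ} (hM : M = ∑ j ∈ s, ev j • vecMulVec (v j) (v j))
    (hv : ∀ i ∈ s, ∀ j ∈ s, v i ⬝ᵥ v j = if i = j then 1 else 0) (hT : T ⊆ s)
    {x : EuclideanSpace ℝ n}
    (hx : x ∈ Submodule.span ℝ (Set.range fun j : T => WithLp.toLp 2 (v j))) :
    ∃ c : T → ℝ, ‖x‖ ^ 2 = ∑ j, c j ^ 2 ∧
      ‖toEuclideanLin M x‖ ^ 2 = ∑ j : T, (ev j * c j) ^ 2 := by
  obtain ⟨c, rfl⟩ := (Submodule.mem_span_range_iff_exists_fun ℝ).mp hx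
  have ho := orthonormal_toLp_of_dotProduct fun i hi j hj => hv i (hT hi) j (hT hj)
  have hpyth (l : T → ℝ) : ‖∑ j, l j • WithLp.toLp 2 (v j)‖ ^ 2 = ∑ j, l j ^ 2 := by
    rw [← real_inner_self_eq_norm_sq, ho.inner_sum l l Finset.univ]
    simp [sq]
  refine ⟨c, hpyth c, ?_⟩
  convert hpyth fun j => ev j * c j using 3
  simp [map_sum, mulVec_eq_smul_of_eq_sum_vecMulVec hM hv (hT _), smul_smul, mul_comm]

theorem le_norm_toEuclideanLin_of_mem_span [DecidableEq n] {M : Matrix n n ℝ} {s T : Finset ι}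
    {ev : ι → ℝ} {v : ι → n → ℝ} (hM : M = ∑ j ∈ s, ev j • vecMulVec (v j) (v j))
    (hv : ∀ i ∈ s, ∀ j ∈ s, v i ⬝ᵥ v j = if i = j then 1 else 0) (hT : T ⊆ s)
    {x : EuclideanSpace ℝ n}
    (hx : x ∈ Submodule.span ℝ (Set.range fun j : T => WithLp.toLp 2 (v j)))
    {a : ℝ} (ha : ∀ j ∈ T, a ≤ |ev j|) : a * ‖x‖ ≤ ‖toEuclideanLin M x‖ := by
  rcases le_total a 0 with ha₀ | ha₀
  · exact (mul_nonpos_of_nonpos_of_nonneg ha₀ (norm_nonneg x)).trans (norm_nonneg _)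
  obtain ⟨c, hxc, hMxc⟩ := exists_norm_sq_eq_sum_of_mem_span hM hv hT hx
  refine le_of_pow_le_pow_left₀ two_ne_zero (norm_nonneg _) ?_
  rw [mul_pow, hxc, hMxc, Finset.mul_sum]
  gcongr with j
  rw [mul_pow, ← sq_abs (ev j)]
  gcongr
  exact ha j j.2

theorem norm_toEuclideanLin_le_of_mem_span [DecidableEq n] {M : Matrix n n ℝ} {s T : Finset ι}
    {ev : ι → ℝ} {v : ι → n → ℝ} (hM : M = ∑ j ∈ s, ev j • vecMulVec (v j) (v j))
    (hv : ∀ i ∈ s, ∀ j ∈ s, v i ⬝ᵥ v j = if i = j then 1 else 0) (hT : T ⊆ s)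
    {x : EuclideanSpace ℝ n}
    (hx : x ∈ Submodule.span ℝ (Set.range fun j : T => WithLp.toLp 2 (v j)))
    {b : ℝ} (hb₀ : 0 ≤ b) (hb : ∀ j ∈ T, |ev j| ≤ b) : ‖toEuclideanLin M x‖ ≤ b * ‖x‖ := by
  obtain ⟨c, hxc, hMxc⟩ := exists_norm_sq_eq_sum_of_mem_span hM hv hT hx
  refine le_of_pow_le_pow_left₀ two_ne_zero (by positivity) ?_
  rw [mul_pow, hxc, hMxc, Finset.mul_sum]
  gcongr with j
  rw [mul_pow, ← sq_abs (ev j)]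
  gcongr
  exact hb j j.2

end SpectralDecomposition

theorem le_add_opNorm_of_lt_card_add_card {N : ℕ} {ι : Type*} [DecidableEq ι]
    {A H : Matrix (Fin N) (Fin N) ℝ} {s t S T : Finset ι} {σ lam : ι → ℝ} {w u : ι → Fin N → ℝ}
    (hA : A = ∑ j ∈ s, σ j • vecMulVec (w j) (w j))
    (hw : ∀ i ∈ s, ∀ j ∈ s, w i ⬝ᵥ w j = if i = j then 1 else 0)
    (hB : A + H = ∑ j ∈ t, lam j • vecMulVec (u j) (u j))
    (hu : ∀ i ∈ t, ∀ j ∈ t, u i ⬝ᵥ u j = if i = j then 1 else 0)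
    (hS : S ⊆ s) (hT : T ⊆ t) (hcard : N < S.card + T.card) {a b : ℝ} (hb₀ : 0 ≤ b)
    (ha : ∀ j ∈ S, a ≤ |σ j|) (hb : ∀ j ∈ T, |lam j| ≤ b) : a ≤ b + opNorm H := by
  set W := Submodule.span ℝ (Set.range fun j : S => WithLp.toLp 2 (w j))
  set V := Submodule.span ℝ (Set.range fun j : T => WithLp.toLp 2 (u j))
  have hdim : 0 < Module.finrank ℝ ↥(W ⊓ V) := by
    have hsup : Module.finrank ℝ ↥(W ⊔ V) ≤ N :=
      (W ⊔ V).finrank_le.trans_eq finrank_euclideanSpace_fin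
    have hsum := Submodule.finrank_sup_add_finrank_inf_eq W V
    rw [finrank_span_toLp fun i hi j hj => hw i (hS hi) j (hS hj),
      finrank_span_toLp fun i hi j hj => hu i (hT hi) j (hT hj)] at hsum
    omega
  obtain ⟨⟨x, hxW, hxV⟩, hx0⟩ := Module.finrank_pos_iff_exists_ne_zero.mp hdim
  have hx : 0 < ‖x‖ := norm_pos_iff.mpr fun h => hx0 (Subtype.ext h)
  refine le_of_mul_le_mul_right ?_ hx
  calc a * ‖x‖ ≤ ‖toEuclideanLin A x‖ := le_norm_toEuclideanLin_of_mem_span hA hw hS hxW ha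
    _ = ‖toEuclideanLin (A + H) x - toEuclideanLin H x‖ := by simp
    _ ≤ ‖toEuclideanLin (A + H) x‖ + ‖toEuclideanLin H x‖ := norm_sub_le _ _
    _ ≤ b * ‖x‖ + opNorm H * ‖x‖ :=
      add_le_add (norm_toEuclideanLin_le_of_mem_span hB hu hT hxV hb₀ hb)
        (norm_toEuclideanLin_le_opNorm H x)
    _ = (b + opNorm H) * ‖x‖ := by ring

theorem abs_le_abs_add_opNorm {N k i : ℕ} {A H : Matrix (Fin N) (Fin N) ℝ}
    {w u : ℕ → Fin N → ℝ} {σ lam : ℕ → ℝ}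
    (hA : A = ∑ j ∈ Finset.Icc 1 N, σ j • vecMulVec (w j) (w j))
    (hw : ∀ i ∈ Finset.Icc 1 N, ∀ j ∈ Finset.Icc 1 N, w i ⬝ᵥ w j = if i = j then 1 else 0)
    (hσ : ∀ i ∈ Finset.Icc 1 N, ∀ j ∈ Finset.Icc 1 N, i ≤ j → |σ j| ≤ |σ i|)
    (hB : A + H = ∑ j ∈ Finset.Icc 1 N, lam j • vecMulVec (u j) (u j))
    (hu : ∀ i ∈ Finset.Icc 1 N, ∀ j ∈ Finset.Icc 1 N, u i ⬝ᵥ u j = if i = j then 1 else 0)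
    (hlam : ∀ i ∈ Finset.Icc 1 N, ∀ j ∈ Finset.Icc 1 N, i ≤ j → |lam j| ≤ |lam i|)
    (hk : k ≤ N) (hi : i ∈ Finset.Icc 1 k) : |σ k| ≤ |lam i| + opNorm H := by
  obtain ⟨hi1, hik⟩ := Finset.mem_Icc.mp hi
  have hkN : Finset.Icc 1 k ⊆ Finset.Icc 1 N := Finset.Icc_subset_Icc_right hk
  have hiN : Finset.Icc i N ⊆ Finset.Icc 1 N := Finset.Icc_subset_Icc_left hi1
  refine le_add_opNorm_of_lt_card_add_card hA hw hB hu hkN hiN ?_ (abs_nonneg _) ?_ ?_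
  · simp only [Nat.card_Icc]
    omega
  · intro j hj
    exact hσ j (hkN hj) k (hkN (Finset.right_mem_Icc.mpr (hi1.trans hik))) (Finset.mem_Icc.mp hj).2
  · intro j hj
    exact hlam i (hkN hi) j (hiN hj) (Finset.mem_Icc.mp hj).1

theorem stmt15_general {N : ℕ} (A H : Matrix (Fin N) (Fin N) ℝ)
    (hAsymm : Aᵀ = A) (hHsymm : Hᵀ = H) (k : ℕ) (hk : k ≤ N)
    (w : ℕ → Fin N → ℝ) (σ : ℕ → ℝ)
    (hAeig : A = ∑ i ∈ Finset.Icc 1 N, σ i • Matrix.vecMulVec (w i) (w i))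
    (hworth : ∀ i ∈ Finset.Icc 1 N, ∀ j ∈ Finset.Icc 1 N,
      dotProduct (w i) (w j) = if i = j then 1 else 0)
    (hσord : ∀ i ∈ Finset.Icc 1 N, ∀ j ∈ Finset.Icc 1 N, i ≤ j → |σ j| ≤ |σ i|)
    (hH : opNorm H ≤ |σ k| / 4)
    (u : ℕ → Fin N → ℝ) (lam : ℕ → ℝ)
    (hBeig : A + H = ∑ i ∈ Finset.Icc 1 N, lam i • Matrix.vecMulVec (u i) (u i))
    (huorth : ∀ i ∈ Finset.Icc 1 N, ∀ j ∈ Finset.Icc 1 N,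
      dotProduct (u i) (u j) = if i = j then 1 else 0)
    (hlamord : ∀ i ∈ Finset.Icc 1 N, ∀ j ∈ Finset.Icc 1 N, i ≤ j → |lam j| ≤ |lam i|) :
    Summable (fun st : ℕ × ℕ =>
      H ^ st.1 *
        (A * (∑ i ∈ Finset.Icc 1 k,
            (lam i ^ (st.1 + st.2 + 1))⁻¹ • Matrix.vecMulVec (u i) (u i)) * A) *
        H ^ st.2) ∧
    (∑ i ∈ Finset.Icc 1 k, lam i • Matrix.vecMulVec (u i) (u i)) =
      ∑' st : ℕ × ℕ,
        H ^ st.1 *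
          (A * (∑ i ∈ Finset.Icc 1 k,
              (lam i ^ (st.1 + st.2 + 1))⁻¹ • Matrix.vecMulVec (u i) (u i)) * A) *
          H ^ st.2 := by
  have hsymm : (A + H)ᵀ = A + H := by rw [transpose_add, hAsymm, hHsymm]
  have hterm : ∀ i ∈ Finset.Icc 1 k, HasSum (fun st : ℕ × ℕ =>
      (lam i ^ (st.1 + st.2 + 1))⁻¹ • (H ^ st.1 * (A * vecMulVec (u i) (u i) * A) * H ^ st.2))
      (lam i • vecMulVec (u i) (u i)) := by
    intro i hi
    rcases eq_or_ne (lam i) 0 with hlam0 | hlam0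
    · -- `0⁻¹ = 0` makes every term vanish, as does `λᵢ P`.
      simp [hlam0]
    have hweyl := abs_le_abs_add_opNorm hAeig hworth hσord hBeig huorth hlamord hk hi
    have hHlam : opNorm H < |lam i| := by
      have := abs_pos.mpr hlam0
      linarith
    exact hasSum_inv_pow_smul_pow_mul_mul_vecMulVec_mul_pow hHlam hsymm
      (mulVec_eq_smul_of_eq_sum_vecMulVec hBeig huorth (Finset.Icc_subset_Icc_right hk hi))
  have hsum := hasSum_sum hterm
  simp only [Finset.mul_sum, Finset.sum_mul, mul_smul_comm, smul_mul_assoc] at hsum ⊢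
  exact ⟨hsum.summable, hsum.tsum_eq.symm⟩

/-- Taylor/Neumann expansion of the rank-`k` spectral truncation: with
`‖H‖₂ ≤ |σ_k|/4` and `P_k(B) = U Λ Uᵀ` the rank-`k` truncation of `B = A + H`,
`P_k(B) = Σ_{s,t≥0} H^s (A U Λ^{−(s+t+1)} Uᵀ A) H^t`, absolutely convergent. -/
theorem stmt15 {N : ℕ} (A H : Matrix (Fin N) (Fin N) ℝ)
    (hAsymm : Aᵀ = A) (hHsymm : Hᵀ = H) (k : ℕ) (hk1 : 1 ≤ k) (hk : k ≤ N)
    (w : ℕ → Fin N → ℝ) (σ : ℕ → ℝ)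
    (hAeig : A = ∑ i ∈ Finset.Icc 1 N, σ i • Matrix.vecMulVec (w i) (w i))
    (hworth : ∀ i ∈ Finset.Icc 1 N, ∀ j ∈ Finset.Icc 1 N,
      dotProduct (w i) (w j) = if i = j then 1 else 0)
    (hσord : ∀ i ∈ Finset.Icc 1 N, ∀ j ∈ Finset.Icc 1 N, i ≤ j → |σ j| ≤ |σ i|)
    (hH : opNorm H ≤ |σ k| / 4)
    (u : ℕ → Fin N → ℝ) (lam : ℕ → ℝ)
    (hBeig : A + H = ∑ i ∈ Finset.Icc 1 N, lam i • Matrix.vecMulVec (u i) (u i))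
    (huorth : ∀ i ∈ Finset.Icc 1 N, ∀ j ∈ Finset.Icc 1 N,
      dotProduct (u i) (u j) = if i = j then 1 else 0)
    (hlamord : ∀ i ∈ Finset.Icc 1 N, ∀ j ∈ Finset.Icc 1 N, i ≤ j → |lam j| ≤ |lam i|) :
    Summable (fun st : ℕ × ℕ =>
      H ^ st.1 *
        (A * (∑ i ∈ Finset.Icc 1 k,
            (lam i ^ (st.1 + st.2 + 1))⁻¹ • Matrix.vecMulVec (u i) (u i)) * A) *
        H ^ st.2) ∧
    (∑ i ∈ Finset.Icc 1 k, lam i • Matrix.vecMulVec (u i) (u i)) =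
      ∑' st : ℕ × ℕ,
        H ^ st.1 *
          (A * (∑ i ∈ Finset.Icc 1 k,
              (lam i ^ (st.1 + st.2 + 1))⁻¹ • Matrix.vecMulVec (u i) (u i)) * A) *
          H ^ st.2 :=
  stmt15_general A H hAsymm hHsymm k hk w σ hAeig hworth hσord hH u lam hBeig huorth hlamord
end

section
/- Suppose Ω ⊆ [m]×[n] is obtained by including each entry independently with probability p ∈ [1/(4n), 1/2] (with n ≥ m), and A ∈ ℝ^{m×n}. Then the matrix H = (√p / (2√n ‖A‖_∞)) (A − (1/p) P_Ω(A)) satisfies: E[H_{ij}] = 0, |H_{ij}| ≤ 1, and E[|H_{ij}|^k] ≤ 1/n for all 2 ≤ k ≤ 2 log n. -/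
/-!
Each entry is `H i j = s (1 - δ / p)` with `|s| ≤ √p / (2√n)` and `δ` a Bernoulli(`p`) variable.
It is centred because `E δ = p`, and bounded by `|s| / p ≤ 1 / (2√(np)) ≤ 1` because
`np ≥ 1/4`. Being bounded by `1`, its `k`-th absolute moments for `k ≥ 2` are at most its
variance `s² (1/p - 1) ≤ 1 / (4n)`.
-/

open scoped BigOperators
open Matrix

open MeasureTheory ProbabilityTheory

lemma abs_le_infNorm {m n : ℕ} (A : Matrix (Fin m) (Fin n) ℝ) (i : Fin m) (j : Fin n) :
    |A i j| ≤ infNorm A :=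
  (le_ciSup (Set.finite_range _).bddAbove j).trans
    (le_ciSup (f := fun i' => ⨆ j', |A i' j'|) (Set.finite_range _).bddAbove i)

/-- Also true for `M = 0` (e.g. `A = 0`), where `x / (y * M)` is the junk value `0`. -/
lemma abs_div_mul_mul_le_div {x y M a : ℝ} (hx : 0 ≤ x) (hy : 0 ≤ y) (ha : |a| ≤ M) :
    |x / (y * M) * a| ≤ x / y := by
  rcases (abs_nonneg a).trans ha |>.eq_or_lt with hM | hM
  · simp [← hM, div_nonneg hx hy]
  · rw [abs_mul, abs_of_nonneg (by positivity), div_mul_eq_mul_div, mul_comm y, ← div_div]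
    gcongr
    rw [div_le_iff₀ hM]
    exact mul_le_mul_of_nonneg_left ha hx

lemma sqrt_div_two_sqrt_mul_inv_le_one {n p : ℝ} (hp : 0 < p) (hnp : 1 / (4 * n) ≤ p) :
    √p / (2 * √n) * (1 / p) ≤ 1 := by
  rcases le_or_gt n 0 with hn | hn
  · simp [Real.sqrt_eq_zero'.2 hn]
  have h4np : 1 ≤ 2 * √n * √p := by
    have : 2 * √n * √p = √(4 * n * p) := by
      rw [Real.sqrt_mul (by positivity), Real.sqrt_mul (by norm_num),
        show (4 : ℝ) = 2 ^ 2 by norm_num, Real.sqrt_sq (by norm_num)]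
    rw [this, Real.one_le_sqrt]
    rwa [div_le_iff₀ (by positivity), mul_comm] at hnp
  calc √p / (2 * √n) * (1 / p) = 1 / (2 * √n * √p) := by
        field_simp
        rw [Real.sq_sqrt hp.le]
    _ ≤ 1 := by rwa [div_le_one (by positivity)]

lemma sq_sqrt_div_two_sqrt_mul_inv {n p : ℝ} (hn : 0 ≤ n) (hp : 0 < p) :
    (√p / (2 * √n)) ^ 2 * (1 / p) = 1 / (4 * n) := by
  rw [div_pow, mul_pow, Real.sq_sqrt hp.le, Real.sq_sqrt hn]
  field_simp
  ring

lemma abs_one_sub_div_le_inv {d p : ℝ} (hd : d = 0 ∨ d = 1) (hp0 : 0 < p) (hp1 : p ≤ 1) :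
    |1 - d / p| ≤ 1 / p := by
  have : 1 ≤ 1 / p := by rw [le_div_iff₀ hp0]; linarith
  rcases hd with rfl | rfl
  · simpa using this
  · rw [abs_of_nonpos (by linarith)]; linarith

lemma abs_mul_one_sub_div_le_one {n p s d : ℝ} (hd : d = 0 ∨ d = 1) (hp : 0 < p) (hp1 : p ≤ 1)
    (hnp : 1 / (4 * n) ≤ p) (hs : |s| ≤ √p / (2 * √n)) : |s * (1 - d / p)| ≤ 1 :=
  calc |s * (1 - d / p)| ≤ √p / (2 * √n) * (1 / p) := by
        rw [abs_mul]
        exact mul_le_mul hs (abs_one_sub_div_le_inv hd hp hp1) (abs_nonneg _) (by positivity)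
    _ ≤ 1 := sqrt_div_two_sqrt_mul_inv_le_one hp hnp

lemma eq_indicator_of_zero_or_one {Ω : Type*} {δ : Ω → ℝ} (h01 : ∀ ω, δ ω = 0 ∨ δ ω = 1) :
    δ = {ω | δ ω = 1}.indicator 1 := by
  funext ω
  rcases h01 ω with h | h <;> simp [Set.indicator, h]

section ZeroOne

variable {Ω : Type*} [MeasurableSpace Ω] {μ : Measure Ω} {δ : Ω → ℝ}

lemma integrable_of_zero_or_one [IsFiniteMeasure μ] (hm : Measurable δ)
    (h01 : ∀ ω, δ ω = 0 ∨ δ ω = 1) : Integrable δ μ := by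
  rw [eq_indicator_of_zero_or_one h01]
  exact (integrable_const 1).indicator (hm (measurableSet_singleton 1))

lemma integral_of_zero_or_one (hm : Measurable δ) (h01 : ∀ ω, δ ω = 0 ∨ δ ω = 1) :
    ∫ ω, δ ω ∂μ = μ.real {ω | δ ω = 1} := by
  nth_rw 1 [eq_indicator_of_zero_or_one h01]
  exact integral_indicator_one (hm (measurableSet_singleton 1))

lemma integral_abs_pow_le_integral_sq [IsFiniteMeasure μ] {X : Ω → ℝ}
    (hX : AEStronglyMeasurable X μ) (h1 : ∀ ω, |X ω| ≤ 1) {k : ℕ} (hk : 2 ≤ k) :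
    ∫ ω, |X ω| ^ k ∂μ ≤ ∫ ω, X ω ^ 2 ∂μ := by
  refine integral_mono_of_nonneg (.of_forall fun ω => by positivity) ?_ (.of_forall fun ω => ?_)
  · refine .of_bound (hX.pow 2) 1 (.of_forall fun ω => ?_)
    rw [Real.norm_eq_abs, abs_pow]
    exact pow_le_one₀ (abs_nonneg _) (h1 ω)
  · simp only [← sq_abs (X ω)]
    exact pow_le_pow_of_le_one (abs_nonneg _) (h1 ω) hk

variable [IsProbabilityMeasure μ] {p : ℝ}

lemma integral_mul_one_sub_div_eq_zero (hint : Integrable δ μ) (hmean : ∫ ω, δ ω ∂μ = p)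
    (hp : p ≠ 0) (s : ℝ) : ∫ ω, s * (1 - δ ω / p) ∂μ = 0 := by
  rw [integral_const_mul, integral_sub (integrable_const 1) (hint.div_const p), integral_div,
    hmean, integral_const]
  simp [hp]

lemma integral_sq_mul_one_sub_div (h01 : ∀ ω, δ ω = 0 ∨ δ ω = 1) (hint : Integrable δ μ)
    (hmean : ∫ ω, δ ω ∂μ = p) (hp : p ≠ 0) (s : ℝ) :
    ∫ ω, (s * (1 - δ ω / p)) ^ 2 ∂μ = s ^ 2 * (1 / p - 1) := by
  have hsq : (fun ω => (s * (1 - δ ω / p)) ^ 2) =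
      fun ω => s ^ 2 * (1 + (1 / p ^ 2 - 2 / p) * δ ω) := by
    funext ω
    rcases h01 ω with h | h <;> rw [h] <;> ring
  rw [hsq, integral_const_mul, integral_add (integrable_const 1) (hint.const_mul _),
    integral_const_mul, hmean, integral_const]
  simp only [probReal_univ, smul_eq_mul, mul_one]
  field_simp
  ring

lemma integral_abs_pow_mul_one_sub_div_le {n s : ℝ} (hm : Measurable δ)
    (h01 : ∀ ω, δ ω = 0 ∨ δ ω = 1) (hmean : ∫ ω, δ ω ∂μ = p) (hp : 0 < p) (hp1 : p ≤ 1)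
    (hn : 0 < n) (hnp : 1 / (4 * n) ≤ p) (hs : |s| ≤ √p / (2 * √n)) {k : ℕ} (hk : 2 ≤ k) :
    ∫ ω, |s * (1 - δ ω / p)| ^ k ∂μ ≤ 1 / n :=
  calc ∫ ω, |s * (1 - δ ω / p)| ^ k ∂μ ≤ ∫ ω, (s * (1 - δ ω / p)) ^ 2 ∂μ :=
        integral_abs_pow_le_integral_sq (by fun_prop)
          (fun ω => abs_mul_one_sub_div_le_one (h01 ω) hp hp1 hnp hs) hk
    _ = s ^ 2 * (1 / p - 1) :=
        integral_sq_mul_one_sub_div h01 (integrable_of_zero_or_one hm h01) hmean hp.ne' s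
    _ ≤ (√p / (2 * √n)) ^ 2 * (1 / p) :=
        mul_le_mul (sq_le_sq.2 (hs.trans (le_abs_self _))) (by linarith)
          (sub_nonneg.2 (one_le_one_div hp hp1)) (sq_nonneg _)
    _ = 1 / (4 * n) := sq_sqrt_div_two_sqrt_mul_inv hn.le hp
    _ ≤ 1 / n := one_div_le_one_div_of_le hn (by linarith)

end ZeroOne

theorem stmt17_general {m n : ℕ} (p : ℝ)
    (hp1 : 1 / (4 * (n : ℝ)) ≤ p) (hp2 : p ≤ 1 / 2)
    {Ω : Type*} [MeasureSpace Ω] [IsProbabilityMeasure (ℙ : Measure Ω)]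
    (δ : Fin m → Fin n → Ω → ℝ)
    (hmeas : ∀ i j, Measurable (δ i j))
    (h01 : ∀ i j ω, δ i j ω = 0 ∨ δ i j ω = 1)
    (hber : ∀ i j, ℙ {ω | δ i j ω = 1} = ENNReal.ofReal p)
    (A : Matrix (Fin m) (Fin n) ℝ)
    (H : Fin m → Fin n → Ω → ℝ)
    (hH : ∀ i j ω, H i j ω =
      Real.sqrt p / (2 * Real.sqrt n * infNorm A) * (A i j - A i j * δ i j ω / p)) :
    (∀ i j, ∫ ω, H i j ω = 0) ∧
    (∀ i j ω, |H i j ω| ≤ 1) ∧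
    (∀ i j (k : ℕ), 2 ≤ k → (k : ℝ) ≤ 2 * Real.log n →
      ∫ ω, |H i j ω| ^ k ≤ 1 / n) := by
  have hn : ∀ _ : Fin n, (0 : ℝ) < n := fun j => by exact_mod_cast j.pos
  have hp : ∀ _ : Fin n, 0 < p := fun j => (one_div_pos.2 (by linarith [hn j])).trans_le hp1
  have hp1' : p ≤ 1 := by linarith
  set s : Fin m → Fin n → ℝ := fun i j => √p / (2 * √n * infNorm A) * A i j
  have hs : ∀ i j, |s i j| ≤ √p / (2 * √n) := fun i j =>
    abs_div_mul_mul_le_div (Real.sqrt_nonneg _) (by positivity) (abs_le_infNorm A i j)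
  have hHs : ∀ i j ω, H i j ω = s i j * (1 - δ i j ω / p) := fun i j ω => by rw [hH]; ring
  have hmean : ∀ i j, ∫ ω, δ i j ω = p := fun i j => by
    rw [integral_of_zero_or_one (hmeas i j) (h01 i j), measureReal_def, hber,
      ENNReal.toReal_ofReal (hp j).le]
  refine ⟨fun i j => ?_, fun i j ω => ?_, fun i j k hk _ => ?_⟩ <;> simp only [hHs]
  · exact integral_mul_one_sub_div_eq_zero (integrable_of_zero_or_one (hmeas i j) (h01 i j))
      (hmean i j) (hp j).ne' _
  · exact abs_mul_one_sub_div_le_one (h01 i j ω) (hp j) hp1' hp1 (hs i j)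
  · exact integral_abs_pow_mul_one_sub_div_le (hmeas i j) (h01 i j) (hmean i j) (hp j) hp1'
      (hn j) hp1 (hs i j) hk

/-- If `Ω` includes each entry independently with probability `p ∈ [1/(4n), 1/2]`
(`n ≥ m`), then `H = (√p/(2√n‖A‖_∞))(A − P_Ω(A)/p)` has entries with mean zero,
absolute value at most `1`, and `k`-th moments at most `1/n` for `2 ≤ k ≤ 2 log n`. -/
theorem stmt17 {m n : ℕ} (hmn : m ≤ n) (p : ℝ)
    (hp1 : 1 / (4 * (n : ℝ)) ≤ p) (hp2 : p ≤ 1 / 2)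
    {Ω : Type*} [MeasureSpace Ω] [IsProbabilityMeasure (ℙ : Measure Ω)]
    (δ : Fin m → Fin n → Ω → ℝ)
    (hmeas : ∀ i j, Measurable (δ i j))
    (h01 : ∀ i j ω, δ i j ω = 0 ∨ δ i j ω = 1)
    (hber : ∀ i j, ℙ {ω | δ i j ω = 1} = ENNReal.ofReal p)
    (hind : iIndepFun
      (fun (ij : Fin m × Fin n) ω => δ ij.1 ij.2 ω) ℙ)
    (A : Matrix (Fin m) (Fin n) ℝ)
    (H : Fin m → Fin n → Ω → ℝ)
    (hH : ∀ i j ω, H i j ω =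
      Real.sqrt p / (2 * Real.sqrt n * infNorm A) * (A i j - A i j * δ i j ω / p)) :
    (∀ i j, ∫ ω, H i j ω = 0) ∧
    (∀ i j ω, |H i j ω| ≤ 1) ∧
    (∀ i j (k : ℕ), 2 ≤ k → (k : ℝ) ≤ 2 * Real.log n →
      ∫ ω, |H i j ω| ^ k ≤ 1 / n) :=
  stmt17_general p hp1 hp2 δ hmeas h01 hber A H hH
end
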